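/- If t is a jump point of g (i.e., g(t⁺) ≠ g(t)) and g̃ is the variation function of g, then liminf_{s→t⁺} |(g(s)-g(t))/(g̃(s)-g̃(t))| = |Δ⁺g(t)|/Δ⁺g̃(t) = 1. In particular the condition φ > 0 of the everywhere FTC automatically holds at jump points, and if g is nondecreasing then φ ≡ 1 on [a,b]. -/

import Mathlib

open Set Filter MeasureTheory Topology
open scoped Classical

/-- Total variation of `g` on the interval `[a,b]`. -/
noncomputable def varOn (g : ℝ → ℝ) (a b : ℝ) : ℝ := (eVariationOn g (Set.Icc a b)).toReal

/-- `g` is left-continuous at every point. -/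
def LeftCont (g : ℝ → ℝ) : Prop := ∀ t : ℝ, ContinuousWithinAt g (Set.Iio t) t

/-- `g` has locally bounded variation. -/
def LocBV (g : ℝ → ℝ) : Prop := ∀ a b : ℝ, BoundedVariationOn g (Set.Icc a b)

/-- The variation function `g̃` of `g`. -/
noncomputable def varFun (g : ℝ → ℝ) (t : ℝ) : ℝ :=
  if 0 ≤ t then g 0 + varOn g 0 t else g 0 - varOn g t 0

/-- Jump (discontinuity) points of a left-continuous `g`. -/
def Dg (g : ℝ → ℝ) : Set ℝ := {t | ¬ ContinuousWithinAt g (Set.Ioi t) t}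

/-- Interiors of constancy intervals of `g`. -/
def Cg (g : ℝ → ℝ) : Set ℝ :=
  {t | ∃ ε > 0, ∀ s ∈ Set.Ioo (t - ε) (t + ε), g s = g t}

/-- Left endpoints of constancy components of `g` which are not jump points. -/
def Ngm (g : ℝ → ℝ) : Set ℝ :=
  {t | t ∉ Dg g ∧ t ∉ Cg g ∧ ∃ ε > 0, ∀ s ∈ Set.Ioo t (t + ε), g s = g t}

/-- Right endpoints of constancy components of `g` which are not jump points. -/
def Ngp (g : ℝ → ℝ) : Set ℝ :=
  {t | t ∉ Dg g ∧ t ∉ Cg g ∧ ∃ ε > 0, ∀ s ∈ Set.Ioo (t - ε) t, g s = g t}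

/-- The point `t*`: `t` itself, unless `t` lies in the interior of a constancy interval,
in which case it is the right endpoint of that constancy component. -/
noncomputable def tStar (g : ℝ → ℝ) (t : ℝ) : ℝ :=
  if t ∈ Cg g then sSup {s | t ≤ s ∧ ∀ u ∈ Set.Icc t s, g u = g t} else t

/-- Stieltjes derivative of `F` w.r.t. a possibly non-monotonic derivator `g`. -/
def HasStieltjesDerivAt (g F : ℝ → ℝ) (t d : ℝ) : Prop :=
  (t ∈ Dg g →
    Tendsto (fun s => (F s - F t) / (g s - g t)) (nhdsWithin t (Set.Ioi t)) (nhds d)) ∧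
  (t ∉ Dg g →
    Tendsto (fun s => (F s - F (tStar g t)) / (g s - g (tStar g t)))
      (nhdsWithin (tStar g t) {s | g s ≠ g (tStar g t)}) (nhds d))

/-- `f` is `g`-continuous on `[a,b]` (w.r.t. the pseudometric `|g̃ s - g̃ t|`). -/
def GCont (g f : ℝ → ℝ) (a b : ℝ) : Prop :=
  ∀ t ∈ Set.Icc a b, ∀ ε > 0, ∃ δ > 0, ∀ s ∈ Set.Icc a b,
    |varFun g s - varFun g t| < δ → |f s - f t| < ε

/-- `F` is `g`-absolutely continuous on `[a,b]`. -/
def GAC (g F : ℝ → ℝ) (a b : ℝ) : Prop :=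
  ∀ ε > 0, ∃ δ > 0, ∀ n : ℕ, ∀ c d : ℕ → ℝ,
    (∀ i < n, a ≤ c i ∧ c i < d i ∧ d i ≤ b) →
    (∀ i < n, ∀ j < n, i ≠ j → Disjoint (Set.Ioo (c i) (d i)) (Set.Ioo (c j) (d j))) →
    (∑ i ∈ Finset.range n, varOn g (c i) (d i)) < δ →
    (∑ i ∈ Finset.range n, |F (d i) - F (c i)|) < ε

/-- Integral of `f` over `s` with respect to a signed measure `μ`. -/
noncomputable def sInt (μ : MeasureTheory.SignedMeasure ℝ) (f : ℝ → ℝ) (s : Set ℝ) : ℝ :=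
  (∫ x in s, f x ∂μ.toJordanDecomposition.posPart) -
    (∫ x in s, f x ∂μ.toJordanDecomposition.negPart)

/-- The function `φ` of the everywhere version of the FTC. -/
noncomputable def phi (g : ℝ → ℝ) (t : ℝ) : ℝ :=
  if t ∈ Ngm g then
    Filter.liminf (fun s => |(g s - g t) / (varFun g s - varFun g t)|)
      (nhdsWithin t (Set.Iio t))
  else if t ∈ Dg g ∪ Cg g ∪ Ngp g then
    Filter.liminf (fun s => |(g s - g (tStar g t)) / (varFun g s - varFun g (tStar g t))|)
      (nhdsWithin (tStar g t) (Set.Ioi (tStar g t)))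
  else
    Filter.liminf (fun s => |(g s - g t) / (varFun g s - varFun g t)|)
      (nhdsWithin t {t}ᶜ)

/-!
For `g` of locally bounded variation, the variation of `g` over `[t, s]` tends to
`|g(t⁺) - g(t)|` as `s → t⁺` (Mathlib's `tendsto_eVariationOn_Icc_right`). Hence
`Δ⁺g̃(t) = |Δ⁺g(t)|`, and at a jump point the difference quotient converges to
`|Δ⁺g(t)| / Δ⁺g̃(t) = 1`.

For nondecreasing `g` we have `g̃ = g`, so each quotient in `φ` is `1` as soon as `g` differs from
its value at the base point near it, on the relevant side. Monotonicity turns a single equality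
`g s = g u` into constancy on the interval between `s` and `u`, and constancy is exactly what the
case split in `φ` excludes: from the left at points of `Ngm`, from the right at jump points and
points of `Ngp`, from both sides elsewhere. At `t*` for `t ∈ Cg`, the point `b ∉ Cg` keeps `t*`
finite and left continuity gives `g t* = g t`, so `g` cannot stay constant to the right of `t*`.
-/

section

variable {g : ℝ → ℝ}

lemma LocBV.locallyBoundedVariationOn (hbv : LocBV g) : LocallyBoundedVariationOn g univ :=
  fun a b _ _ => by simpa only [univ_inter] using hbv a b

lemma varOn_add_varOn (hbv : LocBV g) {a b c : ℝ} (hab : a ≤ b) (hbc : b ≤ c) :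
    varOn g a b + varOn g b c = varOn g a c := by
  have h := eVariationOn.Icc_add_Icc g (s := univ) hab hbc (mem_univ b)
  simp only [univ_inter] at h
  rw [varOn, varOn, varOn, ← h, ENNReal.toReal_add (hbv a b) (hbv b c)]

lemma varFun_sub_varFun (hbv : LocBV g) {t s : ℝ} (hts : t ≤ s) :
    varFun g s - varFun g t = varOn g t s := by
  rcases le_or_gt 0 t with h0t | h0t
  · rw [varFun, varFun, if_pos (h0t.trans hts), if_pos h0t]
    linarith [varOn_add_varOn hbv h0t hts]
  rcases le_or_gt 0 s with h0s | h0s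
  · rw [varFun, varFun, if_pos h0s, if_neg h0t.not_ge]
    linarith [varOn_add_varOn hbv h0t.le h0s]
  · rw [varFun, varFun, if_neg h0s.not_ge, if_neg h0t.not_ge]
    linarith [varOn_add_varOn hbv hts h0s.le]

lemma tendsto_varOn_nhdsGT (hbv : LocBV g) {t L : ℝ} (hL : Tendsto g (𝓝[>] t) (𝓝 L)) :
    Tendsto (varOn g t) (𝓝[>] t) (𝓝 |L - g t|) := by
  have h := hbv.locallyBoundedVariationOn.tendsto_eVariationOn_Icc_right
    (by simpa only [univ_inter] using hL) (mem_univ t)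
  simp only [univ_inter] at h
  have := (ENNReal.tendsto_toReal (edist_ne_top (g t) L)).comp h
  rwa [edist_dist, Real.dist_eq, abs_sub_comm, ENNReal.toReal_ofReal (abs_nonneg _)] at this

lemma varFun_jump_eq_abs_jump (hbv : LocBV g) {t L L' : ℝ} (hL : Tendsto g (𝓝[>] t) (𝓝 L))
    (hL' : Tendsto (varFun g) (𝓝[>] t) (𝓝 L')) :
    L' - varFun g t = |L - g t| := by
  refine tendsto_nhds_unique (hL'.sub_const _) ((tendsto_varOn_nhdsGT hbv hL).congr' ?_)
  filter_upwards [self_mem_nhdsWithin] with s hs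
  exact (varFun_sub_varFun hbv (le_of_lt hs)).symm

lemma liminf_abs_div_varFun_of_jump (hbv : LocBV g) {t L L' : ℝ}
    (hL : Tendsto g (𝓝[>] t) (𝓝 L)) (hL' : Tendsto (varFun g) (𝓝[>] t) (𝓝 L'))
    (hjump : L ≠ g t) :
    liminf (fun s => |(g s - g t) / (varFun g s - varFun g t)|) (𝓝[>] t) =
      |L - g t| / (L' - varFun g t) := by
  have hD := varFun_jump_eq_abs_jump hbv hL hL'
  have hD0 : L' - varFun g t ≠ 0 := by
    rw [hD]; exact (abs_pos.2 (sub_ne_zero.2 hjump)).ne'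
  refine ((hL.sub_const (g t)).div (hL'.sub_const (varFun g t)) hD0).abs.liminf_eq.trans ?_
  rw [abs_div, hD, abs_abs]

lemma liminf_abs_div_self_eq_one {α : Type*} {l : Filter α} [l.NeBot] {f : α → ℝ} {c : ℝ}
    (h : ∀ᶠ s in l, f s ≠ c) : liminf (fun s => |(f s - c) / (f s - c)|) l = 1 := by
  have h₁ : ∀ᶠ s in l, |(f s - c) / (f s - c)| = 1 :=
    h.mono fun s hs => by rw [div_self (sub_ne_zero.2 hs), abs_one]
  rw [liminf_congr h₁, liminf_const]

lemma Monotone.varOn_eq (hg : Monotone g) {a b : ℝ} (hab : a ≤ b) : varOn g a b = g b - g a := by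
  rw [varOn, ← univ_inter (Icc a b),
    (hg.monotoneOn univ).eVariationOn_eq (mem_univ a) (mem_univ b),
    ENNReal.toReal_ofReal (sub_nonneg.2 (hg hab))]

lemma Monotone.varFun_eq (hg : Monotone g) : varFun g = g := by
  funext x
  rcases le_or_gt 0 x with h | h
  · rw [varFun, if_pos h, hg.varOn_eq h]; ring
  · rw [varFun, if_neg h.not_ge, hg.varOn_eq h.le]; ring

lemma Monotone.eventually_ne_nhdsGT_or (hg : Monotone g) (u : ℝ) :
    (∀ᶠ s in 𝓝[>] u, g s ≠ g u) ∨ ∃ ε > 0, ∀ s ∈ Ioo u (u + ε), g s = g u := by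
  by_cases h : ∃ s > u, g s = g u
  · obtain ⟨s, hus, hgs⟩ := h
    refine Or.inr ⟨s - u, sub_pos.2 hus, fun v hv => le_antisymm ?_ (hg hv.1.le)⟩
    exact (hg (by linarith [hv.2])).trans hgs.le
  · push Not at h
    exact Or.inl (eventually_nhdsWithin_of_forall h)

lemma Monotone.eventually_ne_nhdsLT_or (hg : Monotone g) (u : ℝ) :
    (∀ᶠ s in 𝓝[<] u, g s ≠ g u) ∨ ∃ ε > 0, ∀ s ∈ Ioo (u - ε) u, g s = g u := by
  by_cases h : ∃ s < u, g s = g u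
  · obtain ⟨s, hsu, hgs⟩ := h
    refine Or.inr ⟨u - s, sub_pos.2 hsu, fun v hv => le_antisymm (hg hv.2.le) ?_⟩
    exact hgs.symm.le.trans (hg (by linarith [hv.1]))
  · push Not at h
    exact Or.inl (eventually_nhdsWithin_of_forall h)

lemma mem_Cg_of_const_left_of_const_right {u : ℝ}
    (hl : ∃ ε > 0, ∀ s ∈ Ioo (u - ε) u, g s = g u)
    (hr : ∃ ε > 0, ∀ s ∈ Ioo u (u + ε), g s = g u) : u ∈ Cg g := by
  obtain ⟨ε, hε, hl⟩ := hl
  obtain ⟨δ, hδ, hr⟩ := hr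
  refine ⟨min ε δ, lt_min hε hδ, fun s hs => ?_⟩
  rcases lt_trichotomy s u with h | rfl | h
  · exact hl s ⟨by linarith [hs.1, min_le_left ε δ], h⟩
  · rfl
  · exact hr s ⟨h, by linarith [hs.2, min_le_right ε δ]⟩

lemma notMem_Dg_of_const_right {u : ℝ} (hr : ∃ ε > 0, ∀ s ∈ Ioo u (u + ε), g s = g u) :
    u ∉ Dg g := by
  obtain ⟨ε, hε, hr⟩ := hr
  refine fun hD => hD (tendsto_const_nhds.congr' ?_)
  filter_upwards [Ioo_mem_nhdsGT (by linarith : u < u + ε)] with s hs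
  exact (hr s hs).symm

lemma notMem_Dg_of_mem_Cg {u : ℝ} (hu : u ∈ Cg g) : u ∉ Dg g := by
  obtain ⟨ε, hε, hc⟩ := hu
  exact notMem_Dg_of_const_right ⟨ε, hε, fun s hs => hc s ⟨by linarith [hs.1], hs.2⟩⟩

lemma tStar_of_notMem_Cg {u : ℝ} (hu : u ∉ Cg g) : tStar g u = u := if_neg hu

lemma tStar_of_mem_Cg {u : ℝ} (hu : u ∈ Cg g) :
    tStar g u = sSup {s | u ≤ s ∧ ∀ v ∈ Icc u s, g v = g u} := if_pos hu

lemma bddAbove_constancySet {u b : ℝ} (hu : u ∈ Cg g) (hub : u ≤ b) (hb : b ∉ Cg g) :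
    BddAbove {s | u ≤ s ∧ ∀ v ∈ Icc u s, g v = g u} := by
  refine ⟨b, fun s hs => not_lt.1 fun hbs => hb ?_⟩
  obtain ⟨ε, hε, hc⟩ := hu
  have hgb : g b = g u := hs.2 b ⟨hub, hbs.le⟩
  refine ⟨min (b - (u - ε)) (s - b), lt_min (by linarith) (by linarith), fun v hv => ?_⟩
  rw [hgb]
  rcases lt_or_ge v u with hvu | huv
  · exact hc v ⟨by linarith [hv.1, min_le_left (b - (u - ε)) (s - b)], by linarith⟩
  · exact hs.2 v ⟨huv, by linarith [hv.2, min_le_right (b - (u - ε)) (s - b)]⟩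

lemma not_const_right_tStar (hlc : LeftCont g) {u : ℝ} (hu : u ∈ Cg g)
    (hbdd : BddAbove {s | u ≤ s ∧ ∀ v ∈ Icc u s, g v = g u}) :
    ¬ ∃ ε > 0, ∀ s ∈ Ioo (tStar g u) (tStar g u + ε), g s = g (tStar g u) := by
  rw [tStar_of_mem_Cg hu]
  set S := {s | u ≤ s ∧ ∀ v ∈ Icc u s, g v = g u}
  obtain ⟨ε, hε, hc⟩ := hu
  have hmem : u + ε / 2 ∈ S :=
    ⟨by linarith, fun v hv => hc v ⟨by linarith [hv.1], by linarith [hv.2]⟩⟩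
  have huw : u < sSup S := by linarith [le_csSup hbdd hmem]
  have hconst : ∀ v ∈ Ico u (sSup S), g v = g u := fun v hv => by
    obtain ⟨s, hs, hvs⟩ := exists_lt_of_lt_csSup ⟨_, hmem⟩ hv.2
    exact hs.2 v ⟨hv.1, hvs.le⟩
  have hgw : g (sSup S) = g u := by
    refine tendsto_nhds_unique (hlc (sSup S)) (tendsto_const_nhds.congr' ?_)
    filter_upwards [Ioo_mem_nhdsLT huw] with v hv
    exact (hconst v ⟨hv.1.le, hv.2⟩).symm
  rintro ⟨δ, hδ, hr⟩
  have hmem' : sSup S + δ / 2 ∈ S := by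
    refine ⟨by linarith, fun v hv => ?_⟩
    rcases lt_trichotomy v (sSup S) with h | rfl | h
    · exact hconst v ⟨hv.1, h⟩
    · exact hgw
    · rw [← hgw]; exact hr v ⟨h, by linarith [hv.2]⟩
  linarith [le_csSup hbdd hmem']

lemma Monotone.eventually_ne_nhdsLT_of_mem_Ngm (hg : Monotone g) {u : ℝ} (hu : u ∈ Ngm g) :
    ∀ᶠ s in 𝓝[<] u, g s ≠ g u :=
  (hg.eventually_ne_nhdsLT_or u).resolve_right fun hl =>
    hu.2.1 (mem_Cg_of_const_left_of_const_right hl hu.2.2)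

lemma Monotone.eventually_ne_nhdsGT_tStar (hg : Monotone g) (hlc : LeftCont g) {u b : ℝ}
    (hub : u ≤ b) (hb : b ∉ Cg g) (hu : u ∈ Dg g ∪ Cg g ∪ Ngp g) :
    ∀ᶠ s in 𝓝[>] tStar g u, g s ≠ g (tStar g u) := by
  rcases hu with (hD | hC) | hN
  · rw [tStar_of_notMem_Cg fun hC => notMem_Dg_of_mem_Cg hC hD]
    exact (hg.eventually_ne_nhdsGT_or u).resolve_right fun hr => notMem_Dg_of_const_right hr hD
  · exact (hg.eventually_ne_nhdsGT_or _).resolve_right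
      (not_const_right_tStar hlc hC (bddAbove_constancySet hC hub hb))
  · rw [tStar_of_notMem_Cg hN.2.1]
    exact (hg.eventually_ne_nhdsGT_or u).resolve_right fun hr =>
      hN.2.1 (mem_Cg_of_const_left_of_const_right hN.2.2 hr)

lemma Monotone.eventually_ne_nhdsNE (hg : Monotone g) {u : ℝ} (h₁ : u ∉ Ngm g)
    (h₂ : u ∉ Dg g ∪ Cg g ∪ Ngp g) : ∀ᶠ s in 𝓝[≠] u, g s ≠ g u := by
  have hD : u ∉ Dg g := fun h => h₂ (Or.inl (Or.inl h))
  have hC : u ∉ Cg g := fun h => h₂ (Or.inl (Or.inr h))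
  rw [← nhdsLT_sup_nhdsGT, eventually_sup]
  exact ⟨(hg.eventually_ne_nhdsLT_or u).resolve_right fun hl => h₂ (Or.inr ⟨hD, hC, hl⟩),
    (hg.eventually_ne_nhdsGT_or u).resolve_right fun hr => h₁ ⟨hD, hC, hr⟩⟩

end

/-- At a jump point, `liminf_{s→t⁺} |(g s - g t)/(g̃ s - g̃ t)| = |Δ⁺g(t)|/Δ⁺g̃(t) = 1`;
moreover if `g` is nondecreasing then `φ ≡ 1` on `[a,b]`. -/
theorem stmt15 (g : ℝ → ℝ) (hlc : LeftCont g) (hbv : LocBV g) (t L L' : ℝ)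
    (hL : Tendsto g (nhdsWithin t (Set.Ioi t)) (nhds L))
    (hL' : Tendsto (varFun g) (nhdsWithin t (Set.Ioi t)) (nhds L'))
    (hjump : L ≠ g t) :
    (Filter.liminf (fun s => |(g s - g t) / (varFun g s - varFun g t)|)
        (nhdsWithin t (Set.Ioi t)) = |L - g t| / (L' - varFun g t) ∧
      |L - g t| / (L' - varFun g t) = 1) ∧
    (∀ a b : ℝ, a < b → a ∉ Ngm g → b ∉ Cg g ∪ Ngp g ∪ Dg g → Monotone g →
      ∀ u ∈ Set.Icc a b, phi g u = 1) := by
  refine ⟨⟨liminf_abs_div_varFun_of_jump hbv hL hL' hjump, ?_⟩, ?_⟩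
  · rw [varFun_jump_eq_abs_jump hbv hL hL']
    exact div_self (abs_pos.2 (sub_ne_zero.2 hjump)).ne'
  intro a b _ _ hb hg u hu
  simp only [phi, hg.varFun_eq]
  split_ifs with h₁ h₂
  · exact liminf_abs_div_self_eq_one (hg.eventually_ne_nhdsLT_of_mem_Ngm h₁)
  · exact liminf_abs_div_self_eq_one
      (hg.eventually_ne_nhdsGT_tStar hlc hu.2 (fun h => hb (Or.inl (Or.inl h))) h₂)
  · exact liminf_abs_div_self_eq_one (hg.eventually_ne_nhdsNE h₁ h₂)
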